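/- arXiv:2103.16459 — 2 statements merged into one kernel-verified Lean document; each statement's English description precedes it below -/
import Mathlib

section
/- With R and m(u) = ρ̄₂^(γ-1) - uZ - u²/2 as above (γ > 1, ρ̄₂, Z > 0), on any interval where m(u) > 0 one has (γ-1) R'(u) m(u)^((γ-2)/(γ-1)) = ((γ+1)/2)(u+Z)² - ((γ-1)/2)Z² - (γ-1)ρ̄₂^(γ-1); in particular this expression is a strictly monotone (increasing) function of u on [0,∞). -/
/-!
Write `p = 1 / (γ - 1)`, so that `(γ - 2) / (γ - 1) = 1 - p`. Since `m' = -(u + Z)`, the chain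
rule gives `R' = p (u + Z)² m^(p-1) - m^p`, and multiplying by `(γ - 1) m^(1-p)` clears the powers
of `m`: the product is `(u + Z)² - (γ - 1) m`. Substituting `m` and completing the square in
`u² / 2 + u Z` yields the stated quadratic in `u + Z`, which increases on `u ≥ 0` because `Z > 0`
and `γ + 1 > 0`.
-/

open Real

theorem hasDerivAt_sub_mul_sub_sq_div_two (c Z u : ℝ) :
    HasDerivAt (fun v => c - v * Z - v ^ 2 / 2) (-(u + Z)) u := by
  have hlin : HasDerivAt (fun v : ℝ => v * Z) Z u := by
    simpa using (hasDerivAt_id u).mul_const Z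
  have hsq : HasDerivAt (fun v : ℝ => v ^ 2 / 2) u u := by
    simpa using (hasDerivAt_pow 2 u).div_const 2
  exact (((hasDerivAt_const u c).sub hlin).sub hsq).congr_deriv (by ring)

theorem HasDerivAt.const_sub_rpow_mul_add {m : ℝ → ℝ} {u Z : ℝ} (c p : ℝ)
    (hm : HasDerivAt m (-(u + Z)) u) (hmu : 0 < m u) :
    HasDerivAt (fun v => c - m v ^ p * (v + Z)) (p * (u + Z) ^ 2 * m u ^ (p - 1) - m u ^ p) u :=
  ((hasDerivAt_const u c).sub
    ((hm.rpow_const (Or.inl hmu.ne')).mul ((hasDerivAt_id u).add_const Z))).congr_deriv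
      (by simp only [id]; ring)

theorem mul_sub_rpow_mul_rpow_one_sub {x : ℝ} (hx : 0 < x) (p w : ℝ) :
    (p * w * x ^ (p - 1) - x ^ p) * x ^ (1 - p) = p * w - x := by
  rw [sub_mul, mul_assoc, ← rpow_add hx, ← rpow_add hx, show p - 1 + (1 - p) = 0 by ring,
    show p + (1 - p) = 1 by ring, rpow_zero, rpow_one, mul_one]

theorem strictMonoOn_mul_add_sq_sub {a Z : ℝ} (ha : 0 < a) (hZ : 0 ≤ Z) (b : ℝ) :
    StrictMonoOn (fun u => a * (u + Z) ^ 2 - b) (Set.Ici 0) := by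
  intro u hu v _ huv
  have hsq : (u + Z) ^ 2 < (v + Z) ^ 2 :=
    pow_lt_pow_left₀ (by linarith) (by linarith [Set.mem_Ici.mp hu]) two_ne_zero
  dsimp only
  gcongr

theorem RH_deriv_identity_and_monotone_general (γ ρ2 Z : ℝ)
    (hγ : 1 < γ) (hZ : 0 < Z)
    (m R : ℝ → ℝ)
    (hm : ∀ u, m u = ρ2 ^ (γ - 1) - u * Z - u ^ 2 / 2)
    (hR : ∀ u, R u = ρ2 * Z - m u ^ (1 / (γ - 1)) * (u + Z)) :
    (∀ u, 0 < m u →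
      (γ - 1) * deriv R u * m u ^ ((γ - 2) / (γ - 1)) =
        (γ + 1) / 2 * (u + Z) ^ 2 - (γ - 1) / 2 * Z ^ 2 - (γ - 1) * ρ2 ^ (γ - 1)) ∧
    StrictMonoOn
      (fun u => (γ + 1) / 2 * (u + Z) ^ 2 - (γ - 1) / 2 * Z ^ 2 - (γ - 1) * ρ2 ^ (γ - 1))
      (Set.Ici 0) := by
  have hγ1 : γ - 1 ≠ 0 := by linarith
  refine ⟨fun u hmu => ?_, ?_⟩
  · have hmd : HasDerivAt m (-(u + Z)) u := by
      rw [funext hm]; exact hasDerivAt_sub_mul_sub_sq_div_two _ Z u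
    have hRd := hmd.const_sub_rpow_mul_add (ρ2 * Z) (1 / (γ - 1)) hmu
    rw [← funext hR] at hRd
    have hexp : (γ - 2) / (γ - 1) = 1 - 1 / (γ - 1) := by field_simp; ring
    rw [mul_assoc, hRd.deriv, hexp, mul_sub_rpow_mul_rpow_one_sub hmu, hm u]
    field_simp
    ring
  · simpa only [sub_sub] using
      strictMonoOn_mul_add_sq_sub (by linarith : (0 : ℝ) < (γ + 1) / 2) hZ.le _

/-- Identity for the derivative of the Rankine–Hugoniot function, and strict
monotonicity of the resulting expression on `[0, ∞)`. -/
theorem RH_deriv_identity_and_monotone (γ ρ2 Z : ℝ)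
    (hγ : 1 < γ) (hρ2 : 0 < ρ2) (hZ : 0 < Z)
    (m R : ℝ → ℝ)
    (hm : ∀ u, m u = ρ2 ^ (γ - 1) - u * Z - u ^ 2 / 2)
    (hR : ∀ u, R u = ρ2 * Z - m u ^ (1 / (γ - 1)) * (u + Z)) :
    (∀ u, 0 < m u →
      (γ - 1) * deriv R u * m u ^ ((γ - 2) / (γ - 1)) =
        (γ + 1) / 2 * (u + Z) ^ 2 - (γ - 1) / 2 * Z ^ 2 - (γ - 1) * ρ2 ^ (γ - 1)) ∧
    StrictMonoOn
      (fun u => (γ + 1) / 2 * (u + Z) ^ 2 - (γ - 1) / 2 * Z ^ 2 - (γ - 1) * ρ2 ^ (γ - 1))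
      (Set.Ici 0) :=
  RH_deriv_identity_and_monotone_general γ ρ2 Z hγ hZ m R hm hR
end

section
/- For σ, δ ∈ ℝ with σ + δ ∉ {0, π} (mod π) and real numbers a₁₁, a₁₂, a₂₂ with a₁₁ > 0, a₂₂ > 0 and a₁₂² < a₁₁a₂₂, the determinant of the matrix with rows (sin(σ+δ), cos(σ+δ), 0), (sin(σ+δ)cos(σ+δ), cos²(σ+δ) − sin²(σ+δ), −sin(σ+δ)cos(σ+δ)), (a₁₁, 2a₁₂, a₂₂) equals −sin(σ+δ)·(a₁₁cos²(σ+δ) − 2a₁₂ sin(σ+δ)cos(σ+δ) + a₂₂ sin²(σ+δ)), which is nonzero when sin(σ+δ) ≠ 0. -/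
open Real

/-
The determinant is a polynomial identity in `s = sin(σ+δ)`, `c = cos(σ+δ)`, valid without
`s² + c² = 1`. Its second factor is the quadratic form of `(a_ij)` evaluated at `(c, -s)`,
which is positive definite, hence nonzero as soon as `s ≠ 0`.
-/

theorem Matrix.det_fin_three_sin_cos_rows {R : Type*} [CommRing R] (s c a b d : R) :
    (!![s, c, 0; s * c, c ^ 2 - s ^ 2, -(s * c); a, 2 * b, d] : Matrix (Fin 3) (Fin 3) R).det =
      -(s * (a * c ^ 2 - 2 * b * s * c + d * s ^ 2)) := by
  rw [Matrix.det_fin_three]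
  simp only [Matrix.of_apply, Matrix.cons_val', Matrix.cons_val_zero, Matrix.cons_val_one,
    Matrix.cons_val_two, Matrix.empty_val', Matrix.cons_val_fin_one, Matrix.head_cons,
    Matrix.tail_cons, Matrix.head_fin_const]
  ring

theorem binary_quadratic_pos {a b d x y : ℝ} (ha : 0 < a) (hb : b ^ 2 < a * d)
    (hxy : x ≠ 0 ∨ y ≠ 0) : 0 < a * x ^ 2 + 2 * b * x * y + d * y ^ 2 := by
  have hsq : a * (a * x ^ 2 + 2 * b * x * y + d * y ^ 2) =
      (a * x + b * y) ^ 2 + (a * d - b ^ 2) * y ^ 2 := by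
    ring
  refine pos_of_mul_pos_right ?_ ha.le
  rw [hsq]
  rcases eq_or_ne y 0 with rfl | hy
  · have hx : x ≠ 0 := hxy.resolve_right (not_not.mpr rfl)
    simp only [mul_zero, add_zero, ne_eq, OfNat.ofNat_ne_zero, not_false_eq_true, zero_pow]
    positivity
  · have hdisc : 0 < a * d - b ^ 2 := sub_pos.mpr hb
    positivity

theorem wedge_boundary_determinant_general (σ δ a11 a12 a22 : ℝ)
    (h11 : 0 < a11) (h12 : a12 ^ 2 < a11 * a22)
    (M : Matrix (Fin 3) (Fin 3) ℝ)
    (hM : M = !![Real.sin (σ + δ), Real.cos (σ + δ), 0;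
        Real.sin (σ + δ) * Real.cos (σ + δ),
          Real.cos (σ + δ) ^ 2 - Real.sin (σ + δ) ^ 2,
          -(Real.sin (σ + δ) * Real.cos (σ + δ));
        a11, 2 * a12, a22]) :
    M.det = -(Real.sin (σ + δ) *
        (a11 * Real.cos (σ + δ) ^ 2 - 2 * a12 * Real.sin (σ + δ) * Real.cos (σ + δ)
          + a22 * Real.sin (σ + δ) ^ 2)) ∧
    (Real.sin (σ + δ) ≠ 0 → M.det ≠ 0) := by
  have hdet := hM ▸ Matrix.det_fin_three_sin_cos_rows (sin (σ + δ)) (cos (σ + δ)) a11 a12 a22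
  refine ⟨hdet, fun hs => hdet ▸ neg_ne_zero.mpr (mul_ne_zero hs ?_)⟩
  have hQ := binary_quadratic_pos (x := cos (σ + δ)) (y := -sin (σ + δ)) h11 h12
    (Or.inr (neg_ne_zero.mpr hs))
  exact (hQ.trans_eq (by ring)).ne'

/-- Determinant identity from the proof that `u` has no extremum on the interior
of the wedge boundary; the determinant is nonzero when `sin(σ+δ) ≠ 0`. -/
theorem wedge_boundary_determinant (σ δ a11 a12 a22 : ℝ)
    (h11 : 0 < a11) (h22 : 0 < a22) (h12 : a12 ^ 2 < a11 * a22)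
    (M : Matrix (Fin 3) (Fin 3) ℝ)
    (hM : M = !![Real.sin (σ + δ), Real.cos (σ + δ), 0;
        Real.sin (σ + δ) * Real.cos (σ + δ),
          Real.cos (σ + δ) ^ 2 - Real.sin (σ + δ) ^ 2,
          -(Real.sin (σ + δ) * Real.cos (σ + δ));
        a11, 2 * a12, a22]) :
    M.det = -(Real.sin (σ + δ) *
        (a11 * Real.cos (σ + δ) ^ 2 - 2 * a12 * Real.sin (σ + δ) * Real.cos (σ + δ)
          + a22 * Real.sin (σ + δ) ^ 2)) ∧
    (Real.sin (σ + δ) ≠ 0 → M.det ≠ 0) :=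
  wedge_boundary_determinant_general σ δ a11 a12 a22 h11 h12 M hM
end
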